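/- For all r1, r2 ≥ 3, β_2(r1 + r2, r1 + r2 - 1) ≤ β_2(r1, r1 - 1) + β_2(r2, r2 - 1) + 6. -/

import Mathlib

open SimpleGraph

/-- `n` is the number of vertices of a `K_r`-free `k`-partite graph in which
the subgraph induced by any `k - i` parts contains a clique of size `r - 1`. -/
def BetaWitness (i k r n : ℕ) : Prop :=
  ∃ (G : SimpleGraph (Fin n)) (P : Fin n → Fin k),
    (∀ u v, G.Adj u v → P u ≠ P v) ∧ G.CliqueFree r ∧
    ∀ S : Finset (Fin k), S.card = i →
      ∃ T : Finset (Fin n), G.IsNClique (r - 1) T ∧ ∀ v ∈ T, P v ∉ S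

noncomputable def beta (i k r : ℕ) : ℕ := sInf {n | BetaWitness i k r n}

/-!
Take graphs `G₁`, `G₂` attaining `β₂(r₁, r₁ - 1)` and `β₂(r₂, r₂ - 1)` on disjoint sets of parts
and join any two of their vertices lying in different parts. Add six vertices, three in parts of
`G₁` and three in parts of `G₂`, carrying the triangle-free `gadget` and joined to every vertex of
`G₁`, `G₂` in another part. A clique of such a join splits into cliques of the pieces, so cliques
have at most `(r₁ - 2) + (r₂ - 2) + 2` vertices. Whichever two parts are deleted, some gadget edge
`xy` avoids them; deleting from each `Gᵢ` two of its parts, chosen to cover the deleted parts and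
the parts of `x` and `y`, leaves cliques which together with `xy` have `r₁ + r₂ - 2` vertices.
The minimum defining `β₂(r, r - 1)` is attained since disjoint cliques, one avoiding each pair of
parts, form a witness.
-/

open Finset

namespace SimpleGraph

variable {V W K : Type*}

lemma IsClique.card_lt_of_cliqueFree {G : SimpleGraph V} {n : ℕ} {s : Finset V}
    (hs : G.IsClique (s : Set V)) (hG : G.CliqueFree n) : #s < n := by
  by_contra! h
  obtain ⟨t, hts, rfl⟩ := exists_subset_card_eq h
  exact hG t ⟨hs.subset (coe_subset.2 hts), rfl⟩

def partJoin (G : SimpleGraph V) (H : SimpleGraph W) (c : V → K) (d : W → K) :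
    SimpleGraph (V ⊕ W) where
  Adj
    | .inl a, .inl b => G.Adj a b
    | .inr a, .inr b => H.Adj a b
    | .inl a, .inr b => c a ≠ d b
    | .inr a, .inl b => d a ≠ c b
  symm.symm
    | .inl _, .inl _ => G.adj_symm
    | .inr _, .inr _ => H.adj_symm
    | .inl _, .inr _ | .inr _, .inl _ => Ne.symm
  loopless.irrefl
    | .inl a => G.irrefl (v := a)
    | .inr a => H.irrefl (v := a)

variable {G : SimpleGraph V} {H : SimpleGraph W} {c : V → K} {d : W → K}

lemma partJoin_adj_ne (hG : ∀ u v, G.Adj u v → c u ≠ c v) (hH : ∀ u v, H.Adj u v → d u ≠ d v) :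
    ∀ u v, (partJoin G H c d).Adj u v → Sum.elim c d u ≠ Sum.elim c d v
  | .inl a, .inl b, h => hG a b h
  | .inr a, .inr b, h => hH a b h
  | .inl _, .inr _, h | .inr _, .inl _, h => h

lemma IsClique.partJoin_toLeft {T : Finset (V ⊕ W)}
    (hT : (partJoin G H c d).IsClique (T : Set (V ⊕ W))) : G.IsClique (T.toLeft : Set V) :=
  fun _ ha _ hb hab => hT (mem_toLeft.1 ha) (mem_toLeft.1 hb) (Sum.inl_injective.ne hab)

lemma IsClique.partJoin_toRight {T : Finset (V ⊕ W)}
    (hT : (partJoin G H c d).IsClique (T : Set (V ⊕ W))) : H.IsClique (T.toRight : Set W) :=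
  fun _ ha _ hb hab => hT (mem_toRight.1 ha) (mem_toRight.1 hb) (Sum.inr_injective.ne hab)

lemma cliqueFree_partJoin {a b : ℕ} (hG : G.CliqueFree (a + 1)) (hH : H.CliqueFree (b + 1)) :
    (partJoin G H c d).CliqueFree (a + b + 1) := by
  intro T hT
  have hl := hT.isClique.partJoin_toLeft.card_lt_of_cliqueFree hG
  have hr := hT.isClique.partJoin_toRight.card_lt_of_cliqueFree hH
  have := card_toLeft_add_card_toRight (u := T)
  have := hT.card_eq
  omega

lemma IsNClique.partJoin_disjSum {m n : ℕ} {s : Finset V} {t : Finset W}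
    (hs : G.IsNClique m s) (ht : H.IsNClique n t) (hst : ∀ a ∈ s, ∀ b ∈ t, c a ≠ d b) :
    (partJoin G H c d).IsNClique (m + n) (s.disjSum t) := by
  refine ⟨?_, by rw [card_disjSum, hs.card_eq, ht.card_eq]⟩
  rintro (a | a) ha (b | b) hb hab <;>
    simp only [mem_coe, inl_mem_disjSum, inr_mem_disjSum] at ha hb
  · exact hs.isClique ha hb (by simpa using hab)
  · exact hst a ha b hb
  · exact (hst b hb a ha).symm
  · exact ht.isClique ha hb (by simpa using hab)

end SimpleGraph

structure IsBetaGraph {V K : Type*} (i r : ℕ) (G : SimpleGraph V) (P : V → K) : Prop where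
  adj_ne : ∀ u v, G.Adj u v → P u ≠ P v
  cliqueFree : G.CliqueFree r
  exists_isNClique : ∀ S : Finset K, #S = i →
    ∃ T : Finset V, G.IsNClique (r - 1) T ∧ ∀ v ∈ T, P v ∉ S

section Beta

variable {V W K L : Type*} {i r : ℕ} {G : SimpleGraph V} {P : V → K}

lemma betaWitness_iff {k n : ℕ} :
    BetaWitness i k r n ↔ ∃ (G : SimpleGraph (Fin n)) (P : Fin n → Fin k), IsBetaGraph i r G P :=
  ⟨fun ⟨G, P, h₁, h₂, h₃⟩ => ⟨G, P, h₁, h₂, h₃⟩, fun ⟨G, P, h₁, h₂, h₃⟩ => ⟨G, P, h₁, h₂, h₃⟩⟩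

lemma IsBetaGraph.map (h : IsBetaGraph i r G P) (eV : V ≃ W) (eK : K ≃ L) :
    IsBetaGraph i r (G.map eV) (eK ∘ P ∘ eV.symm) where
  adj_ne := by
    rintro _ _ ⟨-, u, v, huv, rfl, rfl⟩
    simpa using h.adj_ne u v huv
  cliqueFree := h.cliqueFree.comap (Iso.map eV G).isContained'
  exists_isNClique S hS := by
    obtain ⟨T, hT, hTS⟩ := h.exists_isNClique (S.map eK.symm.toEmbedding) (by rwa [card_map])
    refine ⟨T.map eV.toEmbedding, hT.map (f := eV.toEmbedding), ?_⟩
    simp only [mem_map_equiv, Function.comp_apply]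
    intro v hv hvS
    exact hTS _ hv (by simpa [mem_map_equiv] using hvS)

lemma IsBetaGraph.betaWitness [Fintype V] {k : ℕ} (h : IsBetaGraph i r G P) (eK : K ≃ Fin k) :
    BetaWitness i k r (Fintype.card V) :=
  betaWitness_iff.2 ⟨_, _, h.map (Fintype.equivFin V) eK⟩

lemma beta_le_card [Fintype V] {k : ℕ} (eK : K ≃ Fin k) (h : IsBetaGraph i r G P) :
    beta i k r ≤ Fintype.card V :=
  Nat.sInf_le (h.betaWitness eK)

lemma exists_isBetaGraph_beta {k : ℕ} (h : ∃ n, BetaWitness i k r n) :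
    ∃ (G : SimpleGraph (Fin (beta i k r))) (P : Fin (beta i k r) → Fin k), IsBetaGraph i r G P :=
  betaWitness_iff.1 (Nat.sInf_mem h)

end Beta

/-- The vertex `(S, j)` is the vertex in part `j` of the clique reserved for the pair of parts
`S`. -/
def pairCliques (K : Type*) : SimpleGraph {p : Finset K × K // #p.1 = 2 ∧ p.2 ∉ p.1} where
  Adj u v := u.1.1 = v.1.1 ∧ u.1.2 ≠ v.1.2
  symm := ⟨fun _ _ h => ⟨h.1.symm, h.2.symm⟩⟩
  loopless := ⟨fun _ h => h.2 rfl⟩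

lemma isBetaGraph_pairCliques {K : Type*} [Fintype K] [DecidableEq K] {a : ℕ} (hK : Fintype.card K = a + 2) :
    IsBetaGraph 2 (a + 1) (pairCliques K) (fun u => u.1.2) where
  adj_ne _ _ h := h.2
  cliqueFree T hT := by
    obtain ⟨u, hu⟩ : T.Nonempty := card_pos.1 (by rw [hT.card_eq]; omega)
    have hblock : ∀ v ∈ T, v.1.1 = u.1.1 := fun v hv => by
      by_cases hvu : v = u
      · rw [hvu]
      · exact (hT.isClique hv hu hvu).1
    have hcard : #T ≤ #(u.1.1ᶜ) := by
      refine card_le_card_of_injOn (·.1.2) (fun v hv => ?_) (fun v hv w hw hvw => ?_)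
      · simpa [← hblock v hv] using v.2.2
      · by_contra hne
        exact (hT.isClique hv hw hne).2 hvw
    rw [card_compl, hK, u.2.1, hT.card_eq] at hcard
    omega
  exists_isNClique S hS := by
    refine ⟨univ.filter (·.1.1 = S), ⟨?_, ?_⟩, ?_⟩
    · intro u hu v hv huv
      simp only [mem_coe, mem_filter, mem_univ, true_and] at hu hv
      exact ⟨hu.trans hv.symm, fun h => huv (Subtype.ext (Prod.ext (hu.trans hv.symm) h))⟩
    · rw [card_nbij (·.1.2) (t := Sᶜ) ?_ ?_ ?_, card_compl, hK, hS]
      · omega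
      · rintro v hv
        simp only [mem_coe, mem_filter, mem_univ, true_and] at hv
        simpa [← hv] using v.2.2
      · rintro v hv w hw hvw
        simp only [mem_coe, mem_filter, mem_univ, true_and] at hv hw
        exact Subtype.ext (Prod.ext (hv.trans hw.symm) hvw)
      · intro j hj
        simp only [coe_compl, Set.mem_compl_iff, mem_coe] at hj
        exact ⟨⟨(S, j), hS, hj⟩, by simp, rfl⟩
    · intro v hv
      simp only [mem_filter, mem_univ, true_and] at hv
      exact hv ▸ v.2.2

lemma exists_betaWitness_two (a : ℕ) : ∃ n, BetaWitness 2 (a + 2) (a + 1) n :=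
  ⟨_, (isBetaGraph_pairCliques (K := Fin (a + 2)) (Fintype.card_fin _)).betaWitness (Equiv.refl _)⟩

lemma exists_apply_ne_apply_ne {α β γ : Type*} [Fintype α] (hα : 2 < Fintype.card α)
    (f : α ↪ β) (g : α ↪ γ) (b : β) (c : γ) : ∃ a, f a ≠ b ∧ g a ≠ c := by
  classical
  have hf : #(univ.filter (f · = b)) ≤ 1 :=
    card_le_one.2 fun x hx y hy => f.injective (by simp_all)
  have hg : #(univ.filter (g · = c)) ≤ 1 :=
    card_le_one.2 fun x hx y hy => g.injective (by simp_all)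
  obtain ⟨a, -, ha⟩ := exists_mem_notMem_of_card_lt_card
    (s := univ.filter (f · = b) ∪ univ.filter (g · = c)) (t := univ)
    ((card_union_le _ _).trans_lt (by rw [card_univ]; omega))
  exact ⟨a, by simpa [not_or] using ha⟩

/-- `inl m` and `inr m` go to part `m` of the first and of the second graph. The edges form the
4-cycle `inl 0, inl 1, inr 1, inr 0` and the edge `inl 2, inr 2`: no triangle, but whichever two
parts are deleted, some edge survives. -/
def gadget : SimpleGraph (Fin 3 ⊕ Fin 3) where
  Adj
    | .inl m, .inl n | .inr m, .inr n => m.val + n.val = 1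
    | .inl m, .inr n | .inr m, .inl n => m = n
  symm.symm
    | .inl _, .inl _ | .inr _, .inr _ => fun h => by omega
    | .inl _, .inr _ | .inr _, .inl _ => Eq.symm
  loopless.irrefl
    | .inl _ | .inr _ => fun h => by omega

instance : DecidableRel gadget.Adj
  | .inl m, .inl n | .inr m, .inr n => inferInstanceAs (Decidable (m.val + n.val = 1))
  | .inl m, .inr n | .inr m, .inl n => inferInstanceAs (Decidable (m = n))

lemma gadget_cliqueFree : gadget.CliqueFree 3 := by
  intro T hT
  obtain ⟨x, y, z, hxy, hxz, hyz, -⟩ := is3Clique_iff.1 hT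
  revert x y z
  decide

def betaSum {V₁ V₂ K₁ K₂ : Type*} (G₁ : SimpleGraph V₁) (G₂ : SimpleGraph V₂) (P₁ : V₁ → K₁)
    (P₂ : V₂ → K₂) (f₁ : Fin 3 ↪ K₁) (f₂ : Fin 3 ↪ K₂) :
    SimpleGraph ((V₁ ⊕ V₂) ⊕ (Fin 3 ⊕ Fin 3)) :=
  partJoin (partJoin G₁ G₂ (Sum.inl ∘ P₁) (Sum.inr ∘ P₂)) gadget (Sum.map P₁ P₂) (Sum.map f₁ f₂)

section BetaSum

variable {V₁ V₂ K₁ K₂ : Type*} {G₁ : SimpleGraph V₁} {G₂ : SimpleGraph V₂}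
  {P₁ : V₁ → K₁} {P₂ : V₂ → K₂} (f₁ : Fin 3 ↪ K₁) (f₂ : Fin 3 ↪ K₂)

lemma exists_gadget_adj_avoiding [DecidableEq K₁] [DecidableEq K₂] {S : Finset (K₁ ⊕ K₂)}
    (hS : #S = 2) :
    ∃ (S₁ : Finset K₁) (S₂ : Finset K₂) (x y : Fin 3 ⊕ Fin 3),
      #S₁ = 2 ∧ #S₂ = 2 ∧ S ⊆ S₁.disjSum S₂ ∧ gadget.Adj x y ∧
      Sum.map f₁ f₂ x ∈ S₁.disjSum S₂ \ S ∧ Sum.map f₁ f₂ y ∈ S₁.disjSum S₂ \ S := by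
  obtain ⟨p, q, hpq, rfl⟩ := card_eq_two.1 hS
  have mixed (s : K₁) (t : K₂) : ∃ (S₁ : Finset K₁) (S₂ : Finset K₂) (x y : Fin 3 ⊕ Fin 3),
      #S₁ = 2 ∧ #S₂ = 2 ∧ {.inl s, .inr t} ⊆ S₁.disjSum S₂ ∧ gadget.Adj x y ∧
      Sum.map f₁ f₂ x ∈ S₁.disjSum S₂ \ {.inl s, .inr t} ∧
      Sum.map f₁ f₂ y ∈ S₁.disjSum S₂ \ {.inl s, .inr t} := by
    obtain ⟨m, hms, hmt⟩ := exists_apply_ne_apply_ne (by simp) f₁ f₂ s t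
    exact ⟨{s, f₁ m}, {t, f₂ m}, .inl m, .inr m, card_pair (Ne.symm hms), card_pair (Ne.symm hmt),
      by simp [insert_subset_iff], rfl, by simp [hms], by simp [hmt]⟩
  rcases p with s | s <;> rcases q with t | t
  · exact ⟨{s, t}, {f₂ 0, f₂ 1}, .inr 0, .inr 1, card_pair (by simpa using hpq),
      card_pair (by simp), by simp [insert_subset_iff], by decide, by simp, by simp⟩
  · exact mixed s t
  · rw [pair_comm]
    exact mixed t s
  · exact ⟨{f₁ 0, f₁ 1}, {s, t}, .inl 0, .inl 1, card_pair (by simp),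
      card_pair (by simpa using hpq), by simp [insert_subset_iff], by decide, by simp, by simp⟩

lemma IsBetaGraph.exists_isNClique_betaSum [DecidableEq K₁] [DecidableEq K₂] {a b : ℕ}
    (h₁ : IsBetaGraph 2 (a + 1) G₁ P₁) (h₂ : IsBetaGraph 2 (b + 1) G₂ P₂)
    {S : Finset (K₁ ⊕ K₂)} {S₁ : Finset K₁} {S₂ : Finset K₂} {x y : Fin 3 ⊕ Fin 3}
    (hS₁ : #S₁ = 2) (hS₂ : #S₂ = 2) (hS : S ⊆ S₁.disjSum S₂) (hxy : gadget.Adj x y)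
    (hx : Sum.map f₁ f₂ x ∈ S₁.disjSum S₂ \ S) (hy : Sum.map f₁ f₂ y ∈ S₁.disjSum S₂ \ S) :
    ∃ T, (betaSum G₁ G₂ P₁ P₂ f₁ f₂).IsNClique (a + b + 2) T ∧
      ∀ v ∈ T, Sum.elim (Sum.map P₁ P₂) (Sum.map f₁ f₂) v ∉ S := by
  obtain ⟨T₁, hT₁, hT₁S⟩ := h₁.exists_isNClique S₁ hS₁
  obtain ⟨T₂, hT₂, hT₂S⟩ := h₂.exists_isNClique S₂ hS₂
  have hout : ∀ u ∈ T₁.disjSum T₂, Sum.map P₁ P₂ u ∉ S₁.disjSum S₂ := by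
    rintro (u | u) hu <;> simp only [inl_mem_disjSum, inr_mem_disjSum] at hu
    · simpa using hT₁S u hu
    · simpa using hT₂S u hu
  rw [mem_sdiff] at hx hy
  refine ⟨(T₁.disjSum T₂).disjSum {x, y}, ?_, ?_⟩
  · refine (hT₁.partJoin_disjSum hT₂ fun _ _ _ _ => Sum.inl_ne_inr).partJoin_disjSum
      ((isNClique_iff _).2 ⟨by simpa using isClique_pair.2 fun _ => hxy, card_pair hxy.ne⟩) ?_
    intro u hu v hv huv
    simp only [mem_insert, mem_singleton] at hv
    rcases hv with rfl | rfl
    · exact hout u hu (huv ▸ hx.1)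
    · exact hout u hu (huv ▸ hy.1)
  · rintro (u | v) hu <;> simp only [inl_mem_disjSum, inr_mem_disjSum] at hu
    · exact fun h => hout u hu (hS h)
    · simp only [mem_insert, mem_singleton] at hu
      rcases hu with rfl | rfl
      exacts [hx.2, hy.2]

theorem IsBetaGraph.betaSum {a b : ℕ} (h₁ : IsBetaGraph 2 (a + 1) G₁ P₁)
    (h₂ : IsBetaGraph 2 (b + 1) G₂ P₂) :
    IsBetaGraph 2 (a + b + 3) (betaSum G₁ G₂ P₁ P₂ f₁ f₂)
      (Sum.elim (Sum.map P₁ P₂) (Sum.map f₁ f₂)) where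
  adj_ne := partJoin_adj_ne
    (partJoin_adj_ne (fun u v h => Sum.inl_injective.ne (h₁.adj_ne u v h))
      (fun u v h => Sum.inr_injective.ne (h₂.adj_ne u v h)))
    (fun _ _ h => (Sum.map_injective.2 ⟨f₁.injective, f₂.injective⟩).ne h.ne)
  cliqueFree := cliqueFree_partJoin (cliqueFree_partJoin h₁.cliqueFree h₂.cliqueFree)
    gadget_cliqueFree
  exists_isNClique S hS := by
    classical
    obtain ⟨S₁, S₂, x, y, hS₁, hS₂, hS, hxy, hx, hy⟩ := exists_gadget_adj_avoiding f₁ f₂ hS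
    exact h₁.exists_isNClique_betaSum f₁ f₂ h₂ hS₁ hS₂ hS hxy hx hy

end BetaSum

theorem stmt_19 (r1 r2 : ℕ) (h1 : 3 ≤ r1) (h2 : 3 ≤ r2) :
    beta 2 (r1 + r2) (r1 + r2 - 1) ≤ beta 2 r1 (r1 - 1) + beta 2 r2 (r2 - 1) + 6 := by
  obtain ⟨a, rfl⟩ : ∃ a, r1 = a + 2 := ⟨r1 - 2, by omega⟩
  obtain ⟨b, rfl⟩ : ∃ b, r2 = b + 2 := ⟨r2 - 2, by omega⟩
  obtain ⟨G₁, P₁, hG₁⟩ := exists_isBetaGraph_beta (exists_betaWitness_two a)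
  obtain ⟨G₂, P₂, hG₂⟩ := exists_isBetaGraph_beta (exists_betaWitness_two b)
  have hsum := hG₁.betaSum (Fin.castLEEmb h1) (Fin.castLEEmb h2) hG₂
  rw [show a + 2 + (b + 2) - 1 = a + b + 3 by omega]
  simpa using beta_le_card finSumFinEquiv hsum
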